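/- arXiv:2101.00445 — 4 statements merged into one kernel-verified Lean document; each statement's English description precedes it below -/
import Mathlib

section
/- Let u, v be points realizing the diameter of a finite planar point set P with ‖uv‖ = 2, and let T be any spanning tree on P in which every edge has length at most 1/f for some f > 0. Then max(|S_u|, |S_v|) ≥ f·|T|, where S_p denotes the star connecting p to all other points of P and |·| denotes total Euclidean length. -/
/-- If `u, v ∈ P` realize the diameter of `P` with `dist u v = 2`, and `T` is a
spanning tree on `P` (modeled by its edge set: `P.card - 1` edges with endpoints in `P`),
each edge of length at most `1/f`, then `max |S_u| |S_v| ≥ f · |T|`. -/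
theorem stmt_0 (P : Finset (EuclideanSpace ℝ (Fin 2)))
    (u v : EuclideanSpace ℝ (Fin 2)) (hu : u ∈ P) (hv : v ∈ P)
    (huv : dist u v = 2)
    (hdiam : ∀ p ∈ P, ∀ q ∈ P, dist p q ≤ 2)
    (f : ℝ) (hf : 0 < f)
    (T : Finset (EuclideanSpace ℝ (Fin 2) × EuclideanSpace ℝ (Fin 2)))
    (hTP : ∀ e ∈ T, e.1 ∈ P ∧ e.2 ∈ P)
    (hTcard : T.card = P.card - 1)
    (hTlen : ∀ e ∈ T, dist e.1 e.2 ≤ 1 / f) :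
    f * ∑ e ∈ T, dist e.1 e.2 ≤
      max (∑ p ∈ P, dist u p) (∑ p ∈ P, dist v p) := by
  have h1 : ∑ e ∈ T, dist e.1 e.2 ≤ T.card * (1 / f) := by
    calc ∑ e ∈ T, dist e.1 e.2 ≤ ∑ _e ∈ T, (1 / f) := Finset.sum_le_sum hTlen
    _ = T.card * (1 / f) := by simp
  have h2 : f * ∑ e ∈ T, dist e.1 e.2 ≤ T.card := by
    have := mul_le_mul_of_nonneg_left h1 hf.le
    calc f * ∑ e ∈ T, dist e.1 e.2 ≤ f * (T.card * (1 / f)) := this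
    _ = T.card := by field_simp
  have h3 : (T.card : ℝ) ≤ P.card := by
    exact_mod_cast hTcard ▸ Nat.sub_le P.card 1
  have h4 : (2 : ℝ) * P.card ≤ (∑ p ∈ P, dist u p) + ∑ p ∈ P, dist v p := by
    rw [← Finset.sum_add_distrib]
    calc (2 : ℝ) * P.card = ∑ _p ∈ P, (2 : ℝ) := by rw [Finset.sum_const]; ring
    _ ≤ ∑ p ∈ P, (dist u p + dist v p) := by
        refine Finset.sum_le_sum fun p _ => ?_
        calc (2:ℝ) = dist u v := huv.symm
        _ ≤ dist u p + dist p v := dist_triangle u p v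
        _ = dist u p + dist v p := by rw [dist_comm p v]
  have h5 : (P.card : ℝ) ≤ max (∑ p ∈ P, dist u p) (∑ p ∈ P, dist v p) := by
    nlinarith [le_max_left (∑ p ∈ P, dist u p) (∑ p ∈ P, dist v p),
      le_max_right (∑ p ∈ P, dist u p) (∑ p ∈ P, dist v p)]
  linarith
end

section
/- Let d ∈ (0, 1], a = (−d, 0), b = (d, 0), and let p = (x, y) with x, y ≥ 0. Define p_a as the point on the ray from p through a with x-coordinate −(2−d), and p_b as the point on the ray from p through b with x-coordinate 2−d (this requires x < d). If ‖p p_a‖ ≤ 2d, then ‖p p_b‖ ≤ ‖p p_a‖. -/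
/-! Write `s = d + x` and `t = d - x` for the horizontal distances from `p` to `a` and `b`.
By similar triangles `‖p p_a‖ = (2 - t) / s * √(s² + y²)` and `‖p p_b‖ = (2 - s) / t * √(t² + y²)`,
so the theorem is an inequality between these two expressions, symmetric under `s ↔ t`.
After squaring it is affine in `y²`, and its defect factors as
`(s - t) * (s² t² (4 - s - t) - y² (2 - s - t) (s (2 - s) + t (2 - t)))`;
the hypothesis `‖p p_a‖ ≤ s + t` bounds `y²` from above, and substituting this bound leaves a
polynomial inequality whose difference has nonnegative coefficients in `t`, `s - t`, `2 - s - t`. -/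

noncomputable def pt (x y : ℝ) : EuclideanSpace ℝ (Fin 2) := WithLp.toLp 2 ![x, y]

theorem dist_pt (x y x' y' : ℝ) : dist (pt x y) (pt x' y') = √((x - x') ^ 2 + (y - y') ^ 2) := by
  simp [pt, EuclideanSpace.dist_eq, Fin.sum_univ_two, Real.dist_eq, sq_abs]

theorem dist_self_add_smul_sub {𝕜 E : Type*} [NormedField 𝕜] [SeminormedAddCommGroup E]
    [NormedSpace 𝕜 E] (p q : E) (c : 𝕜) : dist p (p + c • (q - p)) = ‖c‖ * dist p q := by
  rw [add_comm, ← AffineMap.lineMap_apply_module', dist_left_lineMap]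

/- With `u = s - t` and `w = 2 - s - t` this is the homogeneous form of
`(s + 2t - 2)(s + 2)(2 - s - t)(s(2 - s) + t(2 - t)) ≤ t²(2 - t)²(4 - s - t)`. -/
theorem quintic_le_of_nonneg (t u w : ℝ) (ht : 0 ≤ t) (hu : 0 ≤ u) (hw : 0 ≤ w) :
    (t - w) * (3 * t + 2 * u + w) * w * ((t + u) * (t + w) + t * (t + u + w)) ≤
      t ^ 2 * (t + u + w) ^ 2 * (2 * t + u + 2 * w) := by
  rw [← sub_nonneg]
  have expand : t ^ 2 * (t + u + w) ^ 2 * (2 * t + u + 2 * w) -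
      (t - w) * (3 * t + 2 * u + w) * w * ((t + u) * (t + w) + t * (t + u + w)) =
      2 * t ^ 5 + 5 * t ^ 4 * u + 4 * t ^ 3 * u ^ 2 + 4 * t ^ 3 * w ^ 2 + t ^ 2 * u ^ 3
        + 6 * t ^ 2 * u * w ^ 2 + 8 * t ^ 2 * w ^ 3 + 2 * t * u ^ 2 * w ^ 2 + 8 * t * u * w ^ 3
        + 2 * t * w ^ 4 + 2 * u ^ 2 * w ^ 3 + u * w ^ 4 := by ring
  rw [expand]
  positivity

theorem two_sub_sq_mul_sq_mul_le (s t Y : ℝ) (ht : 0 ≤ t) (hts : t ≤ s) (hst : s + t ≤ 2)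
    (h : (2 - t) ^ 2 * (s ^ 2 + Y) ≤ (s * (s + t)) ^ 2) :
    (2 - s) ^ 2 * s ^ 2 * (t ^ 2 + Y) ≤ (2 - t) ^ 2 * t ^ 2 * (s ^ 2 + Y) := by
  have hpoly := quintic_le_of_nonneg t (s - t) (2 - s - t) ht (by linarith) (by linarith)
  have hK : 0 ≤ (s - t) * (2 - s - t) * (s * (2 - s) + t * (2 - t)) := by
    have : 0 ≤ s * (2 - s) + t * (2 - t) := by nlinarith
    exact mul_nonneg (mul_nonneg (by linarith) (by linarith)) this
  have hs : 0 ≤ s ^ 2 * (s - t) := mul_nonneg (sq_nonneg s) (by linarith)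
  have h2t : 0 < (2 - t) ^ 2 := by
    have : t < 2 := by linarith
    positivity
  refine le_of_mul_le_mul_left ?_ h2t
  linear_combination mul_le_mul_of_nonneg_left h hK + mul_le_mul_of_nonneg_left hpoly hs

theorem two_sub_div_mul_sqrt_le (s t y : ℝ) (ht : 0 < t) (hts : t ≤ s) (hst : s + t ≤ 2)
    (h : (2 - t) / s * √(s ^ 2 + y ^ 2) ≤ s + t) :
    (2 - s) / t * √(t ^ 2 + y ^ 2) ≤ (2 - t) / s * √(s ^ 2 + y ^ 2) := by
  have hs : 0 < s := ht.trans_le hts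
  have hs2 : s ≤ 2 := by linarith
  have ht2 : t < 2 := by linarith
  have hA : √(s ^ 2 + y ^ 2) ^ 2 = s ^ 2 + y ^ 2 := Real.sq_sqrt (by positivity)
  have hB : √(t ^ 2 + y ^ 2) ^ 2 = t ^ 2 + y ^ 2 := Real.sq_sqrt (by positivity)
  rw [div_mul_eq_mul_div, div_le_iff₀ hs] at h
  have hsq : (2 - t) ^ 2 * (s ^ 2 + y ^ 2) ≤ (s * (s + t)) ^ 2 := by
    rw [← hA, ← mul_pow]
    exact pow_le_pow_left₀ (by positivity) (by linarith) 2
  have key : ((2 - s) * s * √(t ^ 2 + y ^ 2)) ^ 2 ≤ ((2 - t) * t * √(s ^ 2 + y ^ 2)) ^ 2 := by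
    simp only [mul_pow, hA, hB]
    exact two_sub_sq_mul_sq_mul_le s t (y ^ 2) ht.le hts hst hsq
  rw [pow_le_pow_iff_left₀ (by positivity) (by positivity) two_ne_zero] at key
  rw [div_mul_eq_mul_div, div_mul_eq_mul_div, div_le_div_iff₀ ht hs]
  linarith

theorem stmt_2_general (d x y : ℝ) (hd1 : d ≤ 1)
    (hx : 0 ≤ x) (hxd : x < d)
    (p a b pa pb : EuclideanSpace ℝ (Fin 2))
    (hp : p = pt x y) (ha : a = pt (-d) 0) (hb : b = pt d 0)
    (hpa : pa = p + ((x + 2 - d) / (x + d)) • (a - p))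
    (hpb : pb = p + ((2 - d - x) / (d - x)) • (b - p))
    (hshort : dist p pa ≤ 2 * d) :
    dist p pb ≤ dist p pa := by
  have hpa' : dist p pa = (2 - (d - x)) / (d + x) * √((d + x) ^ 2 + y ^ 2) := by
    rw [hpa, dist_self_add_smul_sub, Real.norm_of_nonneg (div_nonneg (by linarith) (by linarith)),
      hp, ha, dist_pt]
    ring_nf
  have hpb' : dist p pb = (2 - (d + x)) / (d - x) * √((d - x) ^ 2 + y ^ 2) := by
    rw [hpb, dist_self_add_smul_sub, Real.norm_of_nonneg (div_nonneg (by linarith) (by linarith)),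
      hp, hb, dist_pt]
    ring_nf
  rw [hpa'] at hshort
  rw [hpa', hpb']
  exact two_sub_div_mul_sqrt_le (d + x) (d - x) y (by linarith) (by linarith) (by linarith)
    (by linarith)

/-- Let `0 < d ≤ 1`, `a = (−d,0)`, `b = (d,0)`, and `p = (x,y)` with
`x, y ≥ 0`, `x < d`. Let `p_a` be the point on the ray from `p` through `a` with
x-coordinate `−(2−d)` and `p_b` the point on the ray from `p` through `b` with
x-coordinate `2−d`. If `‖p p_a‖ ≤ 2d`, then `‖p p_b‖ ≤ ‖p p_a‖`. -/
theorem stmt_2 (d x y : ℝ) (hd0 : 0 < d) (hd1 : d ≤ 1)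
    (hx : 0 ≤ x) (hy : 0 ≤ y) (hxd : x < d)
    (p a b pa pb : EuclideanSpace ℝ (Fin 2))
    (hp : p = pt x y) (ha : a = pt (-d) 0) (hb : b = pt d 0)
    (hpa : pa = p + ((x + 2 - d) / (x + d)) • (a - p))
    (hpb : pb = p + ((2 - d - x) / (d - x)) • (b - p))
    (hshort : dist p pa ≤ 2 * d) :
    dist p pb ≤ dist p pa :=
  stmt_2_general d x y hd1 hx hxd p a b pa pb hp ha hb hpa hpb hshort
end

section
/- For each d ≥ 2, Σ_{i=1}^{d+1} i² = (d+1)(d+2)(2d+3)/6, and consequently for the flat arc on d+2 points with gap sequence (1, 3, 5, …, d+1, …, 6, 4, 2), any plane spanning tree of diameter at most d has length at most |T_opt| − 1 = (d+1)(d+2)(2d+3)/6 − 1, where T_opt (the unique longest plane tree) is a path of graph-diameter d+1 and length Σ_{i=1}^{d+1} i². -/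
/-- The unimodal gap sequence `(1, 3, 5, …, d+1, …, 6, 4, 2)` (for `i = 1, …, d+1`). -/
def gapseq (d i : ℕ) : ℕ := if 2 * i ≤ d + 2 then 2 * i - 1 else 2 * (d + 2 - i)

/-- x-coordinates of the `d+2` points of the flat arc: prefix sums of the gap sequence. -/
def xcoord (d j : ℕ) : ℕ := ∑ i ∈ Finset.Icc 1 j, gapseq d i

/-- Length of a spanning tree on the flat arc: sum over edges of the spanned distance. -/
noncomputable def flatLen (d : ℕ) (T : SimpleGraph (Fin (d + 2))) : ℕ :=
  ∑ᶠ e ∈ T.edgeSet,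
    Sym2.lift ⟨fun a b : Fin (d + 2) =>
        max (xcoord d a) (xcoord d b) - min (xcoord d a) (xcoord d b),
      fun a b => by dsimp; rw [Nat.max_comm, Nat.min_comm]⟩ e

/-!
The length of a spanning tree of the flat arc is `∑ cᵢ gᵢ`, where the cover count `cᵢ` is the
number of edges spanning the `i`-th gap. In a plane tree the gap sets of the edges form a laminar
family in which no member is a disjoint union of other members (such a tiling would close a cycle
with the tiled edge), so every member has a point covered by no smaller member. Counting these
points along the chain of members through a gap shows that at most `d + 2 - m` gaps are covered
at least `m` times, and a rearrangement argument then gives `∑ cᵢ gᵢ ≤ ∑ j²`, with equality only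
if `c = g`. In that case every edge spans the peak gap of length `d + 1`, so the degree of a vertex
is the jump of the cover sequence there: at most `2`, and `1` at the left end. A connected graph
with these degrees is a path, whose diameter `d + 1` exceeds `d`.
-/

open Finset

theorem six_mul_sum_Icc_sq (N : ℕ) : 6 * ∑ i ∈ Icc 1 N, i ^ 2 = N * (N + 1) * (2 * N + 1) := by
  induction N with
  | zero => simp
  | succ N ih =>
    rw [sum_Icc_succ_top (by omega), mul_add, ih]
    ring

theorem sum_mul_eq_sum_Icc_sum_filter {ι : Type*} (s : Finset ι) (c g : ι → ℕ) {M : ℕ}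
    (hc : ∀ i ∈ s, c i ≤ M) :
    ∑ i ∈ s, c i * g i = ∑ m ∈ Icc 1 M, ∑ i ∈ s with m ≤ c i, g i := by
  rw [sum_comm' (t' := s) (s' := fun i => Icc 1 (c i))]
  · simp
  · intro m i
    simp only [mem_Icc, mem_filter]
    constructor
    · rintro ⟨⟨h1, -⟩, hi, h2⟩
      exact ⟨⟨h1, h2⟩, hi⟩
    · rintro ⟨⟨h1, h2⟩, hi⟩
      exact ⟨⟨h1, h2.trans (hc i hi)⟩, hi, h2⟩

theorem sum_Icc_sum_Icc_id (N : ℕ) :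
    ∑ m ∈ Icc 1 N, ∑ j ∈ Icc m N, j = ∑ j ∈ Icc 1 N, j ^ 2 := by
  have h := sum_mul_eq_sum_Icc_sum_filter (Icc 1 N) id id fun j hj => (mem_Icc.1 hj).2
  simp only [id, ← sq] at h
  rw [h]
  refine sum_congr rfl fun m hm => sum_congr ?_ fun _ _ => rfl
  ext j
  simp only [mem_filter, mem_Icc] at hm ⊢
  omega

theorem sum_add_card_Icc_sdiff_le {A : Finset ℕ} {m N : ℕ} (hm : 1 ≤ m)
    (hA : ∀ a ∈ A, a ≤ N) (hcard : #A ≤ N + 1 - m) :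
    ∑ a ∈ A, a + #(Icc m N \ A) ≤ ∑ j ∈ Icc m N, j := by
  set B := Icc m N
  -- Elements of `A` below `m` are traded for the (at least as many) missing elements of `B`,
  -- each trade gaining at least `1`.
  have hlow : ∑ a ∈ A \ B, a ≤ #(A \ B) * (m - 1) := by
    simpa using sum_le_card_nsmul (A \ B) id (m - 1) fun a ha => by
      obtain ⟨haA, haB⟩ := mem_sdiff.1 ha
      have := hA a haA
      simp only [B, mem_Icc, not_and, not_le] at haB
      show a ≤ m - 1
      omega
  have hhigh : #(B \ A) * m ≤ ∑ b ∈ B \ A, b := by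
    simpa using card_nsmul_le_sum (B \ A) id m fun b hb => (mem_Icc.1 (mem_sdiff.1 hb).1).1
  have hcard' : #(A \ B) ≤ #(B \ A) := by
    have h1 := card_sdiff_add_card_inter A B
    have h2 := card_sdiff_add_card_inter B A
    have : #B = N + 1 - m := by simp [B]
    rw [inter_comm] at h2
    omega
  have := Nat.mul_le_mul_right (m - 1) hcard'
  have hm' : #(B \ A) * m = #(B \ A) * (m - 1) + #(B \ A) := by
    rw [← Nat.mul_add_one, Nat.sub_add_cancel hm]
  rw [← sum_inter_add_sum_sdiff A B, ← sum_inter_add_sum_sdiff B A, inter_comm]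
  omega

section Rearrangement

variable {N : ℕ} {c g : ℕ → ℕ}

theorem le_of_forall_card_filter_le {s : Finset ℕ} (hc : ∀ m, #{i ∈ s | m ≤ c i} ≤ N + 1 - m)
    {i : ℕ} (hi : i ∈ s) : c i ≤ N := by
  by_contra! h
  have hpos : 0 < #{i ∈ s | N + 1 ≤ c i} := card_pos.2 ⟨i, mem_filter.2 ⟨hi, h⟩⟩
  have := hc (N + 1)
  omega

variable (hg : Set.MapsTo g (Icc 1 N) (Icc 1 N)) (hg' : Set.InjOn g (Icc 1 N))
  (hc : ∀ m, #{i ∈ Icc 1 N | m ≤ c i} ≤ N + 1 - m)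
include hg hg' hc

theorem sum_mul_add_sum_card_sdiff_le :
    ∑ i ∈ Icc 1 N, c i * g i + ∑ m ∈ Icc 1 N, #(Icc m N \ {i ∈ Icc 1 N | m ≤ c i}.image g)
      ≤ ∑ j ∈ Icc 1 N, j ^ 2 := by
  rw [sum_mul_eq_sum_Icc_sum_filter _ c g fun i hi => le_of_forall_card_filter_le hc hi,
    ← sum_Icc_sum_Icc_id, ← sum_add_distrib]
  -- level `m` of the layer-cake decomposition sums `N + 1 - m` or fewer distinct values of `g`
  refine sum_le_sum fun m hm => ?_
  have hinj : Set.InjOn g ({i ∈ Icc 1 N | m ≤ c i} : Finset ℕ) :=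
    hg'.mono (coe_subset.2 (filter_subset _ _))
  rw [← sum_image (f := fun j => j) hinj]
  refine sum_add_card_Icc_sdiff_le (mem_Icc.1 hm).1 (fun a ha => ?_) ?_
  · obtain ⟨i, hi, rfl⟩ := mem_image.1 ha
    exact (mem_Icc.1 (hg (mem_filter.1 hi).1)).2
  · rw [card_image_of_injOn hinj]
    exact hc m

theorem sum_mul_le_sum_sq : ∑ i ∈ Icc 1 N, c i * g i ≤ ∑ j ∈ Icc 1 N, j ^ 2 :=
  (Nat.le_add_right _ _).trans (sum_mul_add_sum_card_sdiff_le hg hg' hc)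

theorem eqOn_of_sum_sq_le_sum_mul (h : ∑ j ∈ Icc 1 N, j ^ 2 ≤ ∑ i ∈ Icc 1 N, c i * g i) :
    ∀ i ∈ Icc 1 N, c i = g i := by
  have hsub : ∀ m ∈ Icc 1 N, Icc m N ⊆ {i ∈ Icc 1 N | m ≤ c i}.image g := by
    have h0 : ∑ m ∈ Icc 1 N, #(Icc m N \ {i ∈ Icc 1 N | m ≤ c i}.image g) = 0 := by
      have := sum_mul_add_sum_card_sdiff_le hg hg' hc
      omega
    intro m hm
    exact sdiff_eq_empty_iff_subset.1 (card_eq_zero.1 ((sum_eq_zero_iff.1 h0) m hm))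
  have himage : ∀ m ∈ Icc 1 N, {i ∈ Icc 1 N | m ≤ c i}.image g = Icc m N := fun m hm =>
    (eq_of_subset_of_card_le (hsub m hm) (card_image_le.trans (by simpa using hc m))).symm
  intro i hi
  have hgi := mem_Icc.1 (hg hi)
  have hci := le_of_forall_card_filter_le hc hi
  apply le_antisymm
  · by_contra! hlt
    have hmem : g i ∈ Icc (g i + 1) N := by
      rw [← himage (g i + 1) (mem_Icc.2 ⟨by omega, by omega⟩)]
      exact mem_image_of_mem g (mem_filter.2 ⟨hi, hlt⟩)
    simp at hmem
  · have hmem : g i ∈ {j ∈ Icc 1 N | g i ≤ c j}.image g := by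
      rw [himage (g i) (mem_Icc.2 hgi)]
      exact mem_Icc.2 ⟨le_rfl, hgi.2⟩
    obtain ⟨j, hj, hgj⟩ := mem_image.1 hmem
    obtain rfl := hg' (mem_filter.1 hj).1 hi hgj
    exact (mem_filter.1 hj).2

end Rearrangement

section GapSequence

variable {d : ℕ}

theorem gapseq_mapsTo : Set.MapsTo (gapseq d) (Icc 1 (d + 1)) (Icc 1 (d + 1)) := by
  intro i hi
  simp only [coe_Icc, Set.mem_Icc] at hi ⊢
  unfold gapseq
  split_ifs <;> omega

theorem gapseq_injOn : Set.InjOn (gapseq d) (Icc 1 (d + 1)) := by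
  intro i hi j hj h
  simp only [coe_Icc, Set.mem_Icc] at hi hj
  unfold gapseq at h
  split_ifs at h <;> omega

theorem gapseq_zero : gapseq d 0 = 0 := rfl

theorem gapseq_one : gapseq d 1 = 1 := by
  simp [gapseq]

theorem gapseq_of_le {i : ℕ} (hi : d + 2 ≤ i) : gapseq d i = 0 := by
  unfold gapseq
  split_ifs <;> omega

theorem gapseq_peak : gapseq d ((d + 3) / 2) = d + 1 := by
  unfold gapseq
  split_ifs <;> omega

theorem gapseq_succ_le (i : ℕ) : gapseq d (i + 1) ≤ gapseq d i + 2 := by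
  unfold gapseq
  split_ifs <;> omega

theorem gapseq_le_succ (i : ℕ) : gapseq d i ≤ gapseq d (i + 1) + 2 := by
  unfold gapseq
  split_ifs <;> omega

theorem xcoord_monotone : Monotone (xcoord d) := fun _ _ hab =>
  sum_le_sum_of_subset (Icc_subset_Icc_right hab)

theorem xcoord_sub_xcoord {a b : ℕ} (hab : a ≤ b) :
    xcoord d b - xcoord d a = ∑ i ∈ Ioc a b, gapseq d i := by
  have hIoc (j : ℕ) : xcoord d j = ∑ i ∈ Ioc 0 j, gapseq d i := by
    rw [xcoord, ← Icc_add_one_left_eq_Ioc, zero_add]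
  rw [hIoc, hIoc, ← sum_Ioc_consecutive _ (Nat.zero_le a) hab, Nat.add_sub_cancel_left]

end GapSequence

section Laminar

variable {α : Type*} [DecidableEq α]

def IsLaminar (𝓕 : Finset (Finset α)) : Prop :=
  ∀ s ∈ 𝓕, ∀ t ∈ 𝓕, Disjoint s t ∨ s ⊆ t ∨ t ⊆ s

def IsTileFree (𝓕 : Finset (Finset α)) : Prop :=
  ∀ s ∈ 𝓕, ∀ C ⊆ 𝓕, s ∉ C → (C : Set (Finset α)).PairwiseDisjoint id → C.biUnion id ≠ s

theorem card_filter_le_card_add_one_sub_of_injOn {β : Type*} {K : Finset β} {f : β → ℕ}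
    (hf : Set.InjOn f K) (hle : ∀ s ∈ K, f s ≤ #K) (m : ℕ) :
    #{s ∈ K | m ≤ f s} ≤ #K + 1 - m := by
  simpa using card_le_card_of_injOn f (t := Icc m #K)
    (fun s hs => by simpa using ⟨(mem_filter.1 hs).2, hle s (mem_filter.1 hs).1⟩)
    (hf.mono (coe_subset.2 (filter_subset _ _)))

variable {𝓕 : Finset (Finset α)}

theorem card_filter_superset_lt {s s' : Finset α} (hs : s ∈ 𝓕) (h : s ⊂ s') :
    #{t ∈ 𝓕 | s' ⊆ t} < #{t ∈ 𝓕 | s ⊆ t} := by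
  refine card_lt_card ((ssubset_iff_of_subset ?_).2 ⟨s, ?_, ?_⟩)
  · exact fun t ht => mem_filter.2 ⟨(mem_filter.1 ht).1, h.subset.trans (mem_filter.1 ht).2⟩
  · exact mem_filter.2 ⟨hs, subset_rfl⟩
  · exact fun hmem => h.not_subset (mem_filter.1 hmem).2

namespace IsLaminar

variable (hL : IsLaminar 𝓕)
include hL

theorem exists_mem_forall_ssubset_not_mem (hT : IsTileFree 𝓕) {s : Finset α} (hs : s ∈ 𝓕) :
    ∃ x ∈ s, ∀ t ∈ 𝓕, t ⊂ s → x ∉ t := by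
  by_contra! hcov
  let C := {t ∈ 𝓕 | t ⊂ s ∧ ∀ u ∈ 𝓕, t ⊂ u → ¬ u ⊂ s}
  have hmaximal {t u : Finset α} (ht : t ∈ C) (hu : u ∈ C) (htu : t ⊆ u) : t = u := by
    by_contra hne
    obtain ⟨-, -, htmax⟩ := mem_filter.1 ht
    exact htmax u (mem_filter.1 hu).1 (htu.ssubset_of_ne hne) (mem_filter.1 hu).2.1
  refine hT s hs C (filter_subset _ _) (fun h => (mem_filter.1 h).2.1.ne rfl) ?_ ?_
  · intro t ht u hu htu
    rcases hL t (mem_filter.1 ht).1 u (mem_filter.1 hu).1 with h | h | h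
    · exact h
    · exact absurd (hmaximal ht hu h) htu
    · exact absurd (hmaximal hu ht h).symm htu
  · refine subset_antisymm (biUnion_subset.2 fun t ht => (mem_filter.1 ht).2.1.subset) ?_
    intro x hx
    obtain ⟨t, ht, hmax⟩ := exists_max_image {t ∈ 𝓕 | t ⊂ s ∧ x ∈ t} card (by
      obtain ⟨t, ht, hts, hxt⟩ := hcov x hx
      exact ⟨t, mem_filter.2 ⟨ht, hts, hxt⟩⟩)
    obtain ⟨ht𝓕, hts, hxt⟩ := mem_filter.1 ht
    refine mem_biUnion.2 ⟨t, mem_filter.2 ⟨ht𝓕, hts, fun u hu htu hus => ?_⟩, hxt⟩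
    exact (card_lt_card htu).not_ge (hmax u (mem_filter.2 ⟨hu, hus, htu.subset hxt⟩))

theorem filter_mem_eq_filter_superset {s : Finset α} (hs : s ∈ 𝓕) {y : α} (hy : y ∈ s)
    (hpriv : ∀ t ∈ 𝓕, t ⊂ s → y ∉ t) : {t ∈ 𝓕 | y ∈ t} = {t ∈ 𝓕 | s ⊆ t} := by
  ext t
  simp only [mem_filter, and_congr_right_iff]
  intro ht
  refine ⟨fun hyt => ?_, fun hst => hst hy⟩
  rcases hL s hs t ht with h | h | h
  · exact absurd hyt (disjoint_left.1 h hy)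
  · exact h
  · obtain rfl | hts := eq_or_ne t s
    · exact subset_rfl
    · exact absurd hyt (hpriv t ht (h.ssubset_of_ne hts))

theorem injOn_card_filter_superset (x : α) :
    Set.InjOn (fun s => #{t ∈ 𝓕 | s ⊆ t}) ({s ∈ 𝓕 | x ∈ s} : Finset (Finset α)) := by
  intro s hs s' hs' h
  obtain ⟨hs𝓕, hxs⟩ := mem_filter.1 hs
  obtain ⟨hs'𝓕, hxs'⟩ := mem_filter.1 hs'
  by_contra hne
  rcases hL s hs𝓕 s' hs'𝓕 with h' | h' | h'
  · exact disjoint_left.1 h' hxs hxs'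
  · exact (card_filter_superset_lt hs𝓕 (h'.ssubset_of_ne hne)).ne h.symm
  · exact (card_filter_superset_lt hs'𝓕 (h'.ssubset_of_ne (Ne.symm hne))).ne h

theorem injOn_of_forall_ssubset_not_mem {π : Finset α → α}
    (hπ : ∀ s ∈ 𝓕, π s ∈ s ∧ ∀ t ∈ 𝓕, t ⊂ s → π s ∉ t) : Set.InjOn π 𝓕 := by
  intro s hs s' hs' h
  rcases hL s hs s' hs' with h' | h' | h'
  · exact absurd (h ▸ (hπ s' hs').1) (disjoint_left.1 h' (hπ s hs).1)
  · by_contra hne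
    exact (hπ s' hs').2 s hs (h'.ssubset_of_ne hne) (h ▸ (hπ s hs).1)
  · by_contra hne
    exact (hπ s hs).2 s' hs' (h'.ssubset_of_ne (Ne.symm hne)) (h ▸ (hπ s' hs').1)

theorem card_filter_le_card_add_one_sub
    (hpriv : ∀ s ∈ 𝓕, ∃ x ∈ s, ∀ t ∈ 𝓕, t ⊂ s → x ∉ t)
    {U : Finset α} (hU : ∀ s ∈ 𝓕, s ⊆ U) (m : ℕ) :
    #{x ∈ U | m ≤ #{s ∈ 𝓕 | x ∈ s}} ≤ #U + 1 - m := by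
  set P := {x ∈ U | m ≤ #{s ∈ 𝓕 | x ∈ s}}
  obtain hP | ⟨x₀, hx₀⟩ := P.eq_empty_or_nonempty
  · simp [hP]
  have : Nonempty α := ⟨x₀⟩
  choose! π hπ using hpriv
  -- The members through `x₀` form a chain; the private points of its `m - 1` largest members
  -- are covered fewer than `m` times.
  set K := {s ∈ 𝓕 | x₀ ∈ s}
  let up (s : Finset α) : ℕ := #{t ∈ 𝓕 | s ⊆ t}
  set L := {s ∈ K | up s < m}
  have hL_card : m - 1 ≤ #L := by
    have hhigh : #{s ∈ K | m ≤ up s} ≤ #K + 1 - m :=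
      card_filter_le_card_add_one_sub_of_injOn (hL.injOn_card_filter_superset x₀)
        (fun s hs => card_le_card fun t ht =>
          mem_filter.2 ⟨(mem_filter.1 ht).1, (mem_filter.1 ht).2 (mem_filter.1 hs).2⟩) m
    have hsplit : #L + #{s ∈ K | m ≤ up s} = #K := by
      simpa only [not_lt] using card_filter_add_card_filter_not (s := K) (fun s => up s < m)
    have hK : m ≤ #K := (mem_filter.1 hx₀).2
    omega
  have hmaps : Set.MapsTo π L ↑(U \ P) := by
    intro s hs
    obtain ⟨hsK, hsm⟩ := mem_filter.1 hs
    have hs𝓕 := (mem_filter.1 hsK).1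
    have hcov := hL.filter_mem_eq_filter_superset hs𝓕 (hπ s hs𝓕).1 (hπ s hs𝓕).2
    simp only [mem_coe, mem_sdiff, P, mem_filter, not_and, not_le, hcov]
    exact ⟨hU s hs𝓕 (hπ s hs𝓕).1, fun _ => hsm⟩
  have hinj : Set.InjOn π L := (hL.injOn_of_forall_ssubset_not_mem hπ).mono
    fun s hs => (mem_filter.1 (mem_filter.1 hs).1).1
  have hPU : P ⊆ U := filter_subset _ U
  have := card_le_card_of_injOn π hmaps hinj
  rw [card_sdiff_of_subset hPU] at this
  have := card_le_card hPU
  omega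

end IsLaminar

end Laminar

namespace Sym2

variable {α : Type*} [LinearOrder α]

theorem mk_inf_sup (e : Sym2 α) : s(e.inf, e.sup) = e :=
  sortEquiv.symm_apply_apply e

theorem mem_iff_inf_eq_or_sup_eq (e : Sym2 α) (v : α) : v ∈ e ↔ e.inf = v ∨ e.sup = v := by
  induction e using Sym2.ind with
  | _ a b => rcases le_total a b with h | h <;> simp [h, eq_comm, or_comm]

end Sym2

theorem Finset.Ioc_subset_Ioc_iff {α : Type*} [LinearOrder α] [LocallyFiniteOrder α]
    {a₁ b₁ a₂ b₂ : α} (h : a₁ < b₁) : Ioc a₁ b₁ ⊆ Ioc a₂ b₂ ↔ b₁ ≤ b₂ ∧ a₂ ≤ a₁ := by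
  rw [← coe_subset, coe_Ioc, coe_Ioc, Set.Ioc_subset_Ioc_iff h]

namespace SimpleGraph

variable {V : Type*} {G : SimpleGraph V}

theorem Connected.exists_adj_dist_eq (hG : G.Connected) {u v : V} {k : ℕ}
    (h : G.dist u v = k + 1) : ∃ w, G.Adj w v ∧ G.dist u w = k := by
  obtain ⟨p, hp⟩ := hG.exists_walk_length_eq_dist u v
  have hnil : ¬ p.Nil := fun hn => by simp [Walk.length_eq_zero_iff.2 hn, h] at hp
  have hadj := p.adj_penultimate hnil
  refine ⟨p.penultimate, hadj, le_antisymm ?_ ?_⟩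
  · have := dist_le p.dropLast
    rw [Walk.length_dropLast] at this
    omega
  · have := hadj.reachable.dist_triangle_right u
    rw [dist_eq_one_iff_adj.2 hadj] at this
    omega

theorem Connected.injective_dist [G.LocallyFinite] (hG : G.Connected) {v₀ : V}
    (h₀ : G.degree v₀ ≤ 1) (h : ∀ v, G.degree v ≤ 2) : Function.Injective (G.dist v₀) := by
  classical
  suffices ∀ k v w, G.dist v₀ v = k → G.dist v₀ w = k → v = w from
    fun v w hvw => this _ v w rfl hvw.symm
  intro k
  induction k with
  | zero =>
    intro v w hv hw
    exact (hG.dist_eq_zero_iff.1 hv).symm.trans (hG.dist_eq_zero_iff.1 hw)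
  | succ k ih =>
    intro v w hv hw
    obtain ⟨u, huv, hu⟩ := hG.exists_adj_dist_eq hv
    obtain ⟨u', huw, hu'⟩ := hG.exists_adj_dist_eq hw
    obtain rfl := ih u u' hu hu'
    -- `v` and `w` share the predecessor `u`, which then has too many neighbours
    by_contra hvw
    have hpair : ({v, w} : Finset V) ⊆ G.neighborFinset u := by
      simp [insert_subset_iff, huv, huw]
    cases k with
    | zero =>
      obtain rfl := hG.dist_eq_zero_iff.1 hu
      have := card_le_card hpair
      rw [card_neighborFinset_eq_degree, card_pair hvw] at this
      omega
    | succ k =>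
      obtain ⟨x, hxu, hx⟩ := hG.exists_adj_dist_eq hu
      have hxv : x ≠ v := by rintro rfl; omega
      have hxw : x ≠ w := by rintro rfl; omega
      have htriple : ({x, v, w} : Finset V) ⊆ G.neighborFinset u := by
        simp [insert_subset_iff, huv, huw, hxu.symm]
      have := card_le_card htriple
      rw [card_neighborFinset_eq_degree, card_insert_of_notMem (by simp [hxv, hxw]),
        card_pair hvw] at this
      have := h u
      omega

end SimpleGraph

namespace FlatArc

variable {n : ℕ}

/-- `i ∈ gapSet e` iff the edge `e` spans the gap between the points `i - 1` and `i`; on the flat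
arc this gap has length `gapseq d i`. -/
def gapSet (e : Sym2 (Fin n)) : Finset ℕ := Ioc (e.inf : ℕ) e.sup

def Noncrossing (T : SimpleGraph (Fin n)) : Prop :=
  ∀ a c b e : Fin n, a < c → c < b → b < e → ¬ (T.Adj a b ∧ T.Adj c e)

theorem gapSet_subset (e : Sym2 (Fin n)) : gapSet e ⊆ Icc 1 (n - 1) := by
  intro i hi
  have := e.sup.isLt
  simp only [gapSet, mem_Ioc, mem_Icc] at hi ⊢
  omega

section Edges

variable {T : SimpleGraph (Fin n)} {e f : Sym2 (Fin n)}

theorem adj_inf_sup (he : e ∈ T.edgeSet) : T.Adj e.inf e.sup := by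
  rwa [← Sym2.mk_inf_sup e, SimpleGraph.mem_edgeSet] at he

theorem inf_lt_sup (he : e ∈ T.edgeSet) : (e.inf : ℕ) < e.sup :=
  (Sym2.inf_le_sup e).lt_of_ne (adj_inf_sup he).ne

theorem gapSet_injOn : Set.InjOn gapSet T.edgeSet := by
  intro e he f hf h
  have hle := (Ioc_subset_Ioc_iff (inf_lt_sup he)).1 h.subset
  have hge := (Ioc_subset_Ioc_iff (inf_lt_sup hf)).1 h.symm.subset
  exact Sym2.inf_eq_inf_and_sup_eq_sup.1
    ⟨Fin.ext (le_antisymm hge.2 hle.2), Fin.ext (le_antisymm hle.1 hge.1)⟩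

theorem Noncrossing.gapSet_disjoint_or_subset (hT : Noncrossing T) (he : e ∈ T.edgeSet)
    (hf : f ∈ T.edgeSet) :
    Disjoint (gapSet e) (gapSet f) ∨ gapSet e ⊆ gapSet f ∨ gapSet f ⊆ gapSet e := by
  by_contra! h
  obtain ⟨hmeet, hef, hfe⟩ := h
  obtain ⟨i, hie, hif⟩ := not_disjoint_iff.1 hmeet
  rw [gapSet, gapSet, Ioc_subset_Ioc_iff (inf_lt_sup he)] at hef
  rw [gapSet, gapSet, Ioc_subset_Ioc_iff (inf_lt_sup hf)] at hfe
  simp only [gapSet, mem_Ioc] at hie hif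
  have := inf_lt_sup he
  have := inf_lt_sup hf
  rcases (by omega : ((e.inf : ℕ) < f.inf ∧ (f.inf : ℕ) < e.sup ∧ (e.sup : ℕ) < f.sup) ∨
      ((f.inf : ℕ) < e.inf ∧ (e.inf : ℕ) < f.sup ∧ (f.sup : ℕ) < e.sup)) with
    ⟨h1, h2, h3⟩ | ⟨h1, h2, h3⟩
  · exact hT _ _ _ _ h1 h2 h3 ⟨adj_inf_sup he, adj_inf_sup hf⟩
  · exact hT _ _ _ _ h1 h2 h3 ⟨adj_inf_sup hf, adj_inf_sup he⟩

theorem reachable_deleteEdges_of_biUnion_gapSet_eq {p : Sym2 (Fin n)} {C : Finset (Sym2 (Fin n))}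
    (hC : ∀ e ∈ C, e ∈ T.edgeSet) (hpC : p ∉ C)
    (hdisj : (C : Set (Sym2 (Fin n))).PairwiseDisjoint gapSet)
    (hcover : C.biUnion gapSet = gapSet p) (hp : p ∈ T.edgeSet) :
    (T.deleteEdges {p}).Reachable p.inf p.sup := by
  have hin (e) (he : e ∈ C) : gapSet e ⊆ gapSet p := hcover ▸ subset_biUnion_of_mem gapSet he
  have hadj (e) (he : e ∈ C) : (T.deleteEdges {p}).Adj e.inf e.sup :=
    SimpleGraph.deleteEdges_adj.2 ⟨adj_inf_sup (hC e he),
      by simpa [Sym2.mk_inf_sup] using ne_of_mem_of_not_mem he hpC⟩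
  -- The pieces of the tiling are chained left to right, starting at `p.inf`.
  have hreach : ∀ k, ∀ e ∈ C, (e.inf : ℕ) = k → (T.deleteEdges {p}).Reachable p.inf e.sup := by
    intro k
    induction k using Nat.strong_induction_on with
    | _ k ih =>
    rintro e he rfl
    have hlt := inf_lt_sup (hC e he)
    have hsub := (Ioc_subset_Ioc_iff hlt).1 (hin e he)
    obtain hinf | hinf := eq_or_lt_of_le hsub.2
    · rw [Fin.ext hinf]
      exact (hadj e he).reachable
    obtain ⟨e', he', hmem'⟩ : ∃ e' ∈ C, (e.inf : ℕ) ∈ gapSet e' := mem_biUnion.1 <| by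
      rw [hcover]
      simp only [gapSet, mem_Ioc]
      omega
    simp only [gapSet, mem_Ioc] at hmem'
    have hjoin : (e'.sup : ℕ) = e.inf := by
      by_contra hne
      have hd : Disjoint (gapSet e') (gapSet e) := hdisj he' he (by rintro rfl; omega)
      refine disjoint_left.1 hd (show (e.inf : ℕ) + 1 ∈ gapSet e' from ?_) ?_ <;>
        simp only [gapSet, mem_Ioc] <;> omega
    have := ih e'.inf hmem'.1 e' he' rfl
    rw [Fin.ext hjoin] at this
    exact this.trans (hadj e he).reachable
  obtain ⟨e, he, hpe⟩ : ∃ e ∈ C, (p.sup : ℕ) ∈ gapSet e := mem_biUnion.1 <| by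
    rw [hcover]
    simp [gapSet, inf_lt_sup hp]
  have hsup : e.sup = p.sup := Fin.ext (le_antisymm
    ((Ioc_subset_Ioc_iff (inf_lt_sup (hC e he))).1 (hin e he)).1 (mem_Ioc.1 hpe).2)
  rw [← hsup]
  exact hreach _ e he rfl

end Edges

section CoverCount

variable {T : SimpleGraph (Fin n)} [DecidableRel T.Adj]

variable (T) in
def coverCount (i : ℕ) : ℕ := #{e ∈ T.edgeFinset | i ∈ gapSet e}

theorem isTileFree_image_gapSet (hT : T.IsAcyclic) : IsTileFree (T.edgeFinset.image gapSet) := by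
  intro s hs 𝓒 h𝓒 hs𝓒 hdisj hcover
  obtain ⟨p, hp, rfl⟩ := mem_image.1 hs
  rw [SimpleGraph.mem_edgeFinset] at hp
  let C := {e ∈ T.edgeFinset | gapSet e ∈ 𝓒}
  have hCT (e) (he : e ∈ C) : e ∈ T.edgeSet := SimpleGraph.mem_edgeFinset.1 (mem_filter.1 he).1
  have hinj : Set.InjOn gapSet (C : Set (Sym2 (Fin n))) := gapSet_injOn.mono fun e he => hCT e he
  have hCimage : C.image gapSet = 𝓒 := by
    ext t
    refine ⟨fun ht => ?_, fun ht => ?_⟩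
    · obtain ⟨e, he, rfl⟩ := mem_image.1 ht
      exact (mem_filter.1 he).2
    · obtain ⟨e, he, rfl⟩ := mem_image.1 (h𝓒 ht)
      exact mem_image_of_mem _ (mem_filter.2 ⟨he, ht⟩)
  have hreach := reachable_deleteEdges_of_biUnion_gapSet_eq hCT
    (fun h => hs𝓒 (mem_filter.1 h).2)
    (fun e he f hf hef => hdisj (mem_filter.1 he).2 (mem_filter.1 hf).2 fun h => hef (hinj he hf h))
    (by rw [← hcover, ← hCimage, image_biUnion]; rfl) hp
  have hbridge := SimpleGraph.isAcyclic_iff_forall_isBridge.1 hT hp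
  rw [← Sym2.mk_inf_sup p, SimpleGraph.isBridge_iff, Sym2.mk_inf_sup] at hbridge
  exact hbridge hreach

theorem coverCount_eq_card_filter_image (i : ℕ) :
    coverCount T i = #{s ∈ T.edgeFinset.image gapSet | i ∈ s} := by
  rw [coverCount, filter_image, card_image_of_injOn]
  exact gapSet_injOn.mono fun e he => SimpleGraph.mem_edgeFinset.1 (mem_filter.1 he).1

theorem card_filter_le_coverCount_le_sub (hT : T.IsTree) (hnc : Noncrossing T) (m : ℕ) :
    #{i ∈ Icc 1 (n - 1) | m ≤ coverCount T i} ≤ n - m := by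
  have hL : IsLaminar (T.edgeFinset.image gapSet) := by
    simp only [IsLaminar, forall_mem_image, SimpleGraph.mem_edgeFinset]
    exact fun e he f hf => hnc.gapSet_disjoint_or_subset he hf
  have := hL.card_filter_le_card_add_one_sub
    (fun s hs => hL.exists_mem_forall_ssubset_not_mem (isTileFree_image_gapSet hT.isAcyclic) hs)
    (fun s hs => by
      obtain ⟨e, -, rfl⟩ := mem_image.1 hs
      exact gapSet_subset e) m
  simp only [← coverCount_eq_card_filter_image, Nat.card_Icc] at this
  obtain ⟨v⟩ := hT.connected.nonempty
  have := v.pos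
  omega

theorem coverCount_succ_add_card (v : Fin n) :
    coverCount T (v + 1) + #{e ∈ T.edgeFinset | e.sup = v}
      = coverCount T v + #{e ∈ T.edgeFinset | e.inf = v} := by
  have hlt (e) (he : e ∈ T.edgeFinset) : (e.inf : ℕ) < e.sup :=
    inf_lt_sup (SimpleGraph.mem_edgeFinset.1 he)
  rw [coverCount, coverCount, ← card_union_of_disjoint, ← card_union_of_disjoint, ← filter_or,
    ← filter_or]
  · congr 1
    refine filter_congr fun e he => ?_
    have := hlt e he
    simp only [gapSet, mem_Ioc, Fin.ext_iff]
    omega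
  · refine disjoint_filter.2 fun e he h1 h2 => ?_
    simp only [gapSet, mem_Ioc, Fin.ext_iff] at h1 h2
    omega
  · refine disjoint_filter.2 fun e he h1 h2 => ?_
    have := hlt e he
    simp only [gapSet, mem_Ioc, Fin.ext_iff] at h1 h2
    omega

theorem degree_eq_card_add_card (v : Fin n) :
    T.degree v = #{e ∈ T.edgeFinset | e.inf = v} + #{e ∈ T.edgeFinset | e.sup = v} := by
  rw [← SimpleGraph.card_incidenceFinset_eq_degree, SimpleGraph.incidenceFinset_eq_filter,
    ← card_union_of_disjoint, ← filter_or]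
  · exact congrArg card (filter_congr fun e _ => Sym2.mem_iff_inf_eq_or_sup_eq e v)
  · exact disjoint_filter.2 fun e he h1 h2 =>
      (inf_lt_sup (SimpleGraph.mem_edgeFinset.1 he)).ne (congrArg Fin.val (h1.trans h2.symm))

theorem degree_add_coverCount_eq {k : ℕ} (hk : ∀ e ∈ T.edgeSet, k ∈ gapSet e) (v : Fin n) :
    T.degree v + coverCount T v = coverCount T (v + 1) ∨
      T.degree v + coverCount T (v + 1) = coverCount T v := by
  have hstep := coverCount_succ_add_card (T := T) v
  rw [degree_eq_card_add_card]
  by_cases hv : (v : ℕ) < k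
  · have : #{e ∈ T.edgeFinset | e.sup = v} = 0 := card_eq_zero.2 <| filter_eq_empty_iff.2
      fun e he hsup => by
        have := hk e (SimpleGraph.mem_edgeFinset.1 he)
        simp only [gapSet, mem_Ioc, hsup] at this
        omega
    omega
  · have : #{e ∈ T.edgeFinset | e.inf = v} = 0 := card_eq_zero.2 <| filter_eq_empty_iff.2
      fun e he hinf => by
        have := hk e (SimpleGraph.mem_edgeFinset.1 he)
        simp only [gapSet, mem_Ioc, hinf] at this
        omega
    omega

end CoverCount

section Arc

variable {d : ℕ} {T : SimpleGraph (Fin (d + 2))} [DecidableRel T.Adj]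

theorem flatLen_eq_sum_coverCount_mul :
    flatLen d T = ∑ i ∈ Icc 1 (d + 1), coverCount T i * gapseq d i := by
  rw [flatLen, ← SimpleGraph.coe_edgeFinset, finsum_mem_coe_finset]
  calc _ = ∑ e ∈ T.edgeFinset, ∑ i ∈ gapSet e, gapseq d i := sum_congr rfl fun e _ => ?_
    _ = ∑ i ∈ Icc 1 (d + 1), ∑ e ∈ T.edgeFinset with i ∈ gapSet e, gapseq d i :=
      sum_comm' fun e i => ?_
    _ = _ := by simp [coverCount]
  · induction e using Sym2.ind with
    | _ a b =>
      rw [Sym2.lift_mk]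
      dsimp only
      rw [← xcoord_monotone.map_max, ← xcoord_monotone.map_min,
        xcoord_sub_xcoord min_le_max]
      rfl
  · have := gapSet_subset (n := d + 2) e
    constructor
    · rintro ⟨he, hi⟩
      exact ⟨mem_filter.2 ⟨he, hi⟩, this hi⟩
    · rintro ⟨hi, -⟩
      exact mem_filter.1 hi

theorem coverCount_eq_gapseq_of_eqOn (hc : ∀ i ∈ Icc 1 (d + 1), coverCount T i = gapseq d i)
    (i : ℕ) : coverCount T i = gapseq d i := by
  by_cases hi : i ∈ Icc 1 (d + 1)
  · exact hc i hi
  have hzero : coverCount T i = 0 := card_eq_zero.2 <| filter_eq_empty_iff.2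
    fun e _ hie => hi (gapSet_subset e hie)
  rw [mem_Icc] at hi
  rcases Nat.eq_zero_or_pos i with rfl | hpos
  · rw [hzero, gapseq_zero]
  · rw [hzero, gapseq_of_le (by omega)]

theorem exists_lt_dist_of_coverCount_eq_gapseq (hT : T.IsTree)
    (hc : ∀ i ∈ Icc 1 (d + 1), coverCount T i = gapseq d i) : ∃ u v, d < T.dist u v := by
  have hc' := coverCount_eq_gapseq_of_eqOn hc
  have hpeak : ∀ e ∈ T.edgeSet, (d + 3) / 2 ∈ gapSet e := by
    have hcard : #T.edgeFinset = d + 1 := by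
      have := hT.card_edgeFinset
      simp only [Fintype.card_fin] at this
      omega
    have hfull := hc' ((d + 3) / 2)
    rw [gapseq_peak, ← hcard, coverCount, card_filter_eq_iff] at hfull
    exact fun e he => hfull e (SimpleGraph.mem_edgeFinset.2 he)
  have hdeg (v : Fin (d + 2)) : T.degree v ≤ 2 := by
    have := gapseq_succ_le (d := d) v
    have := gapseq_le_succ (d := d) v
    rcases degree_add_coverCount_eq hpeak v with h | h <;> rw [hc', hc'] at h <;> omega
  have hdeg0 : T.degree 0 ≤ 1 := by
    rcases degree_add_coverCount_eq hpeak 0 with h | h <;>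
      rw [hc', hc', Fin.val_zero, gapseq_zero, zero_add, gapseq_one] at h <;> omega
  by_contra! hle
  have := card_le_card_of_injOn (T.dist 0) (s := univ) (t := range (d + 1))
    (fun v _ => mem_range.2 (Nat.lt_succ_of_le (hle 0 v)))
    (hT.connected.injective_dist hdeg0 hdeg).injOn
  simp at this

end Arc

end FlatArc

open FlatArc in
theorem stmt_14_general (d : ℕ) :
    (6 * ∑ i ∈ Finset.Icc 1 (d + 1), i ^ 2 = (d + 1) * (d + 2) * (2 * d + 3)) ∧
    ∀ T : SimpleGraph (Fin (d + 2)), T.IsTree →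
      (∀ a c b e : Fin (d + 2), a < c → c < b → b < e → ¬ (T.Adj a b ∧ T.Adj c e)) →
      (∀ u v : Fin (d + 2), T.dist u v ≤ d) →
      6 * flatLen d T + 6 ≤ (d + 1) * (d + 2) * (2 * d + 3) := by
  have hsq : 6 * ∑ i ∈ Icc 1 (d + 1), i ^ 2 = (d + 1) * (d + 2) * (2 * d + 3) := by
    rw [six_mul_sum_Icc_sq]
    ring
  refine ⟨hsq, fun T hT hnc hdist => ?_⟩
  classical
  have hcover (m : ℕ) : #{i ∈ Icc 1 (d + 1) | m ≤ coverCount T i} ≤ d + 1 + 1 - m :=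
    card_filter_le_coverCount_le_sub hT hnc m
  have hlt : flatLen d T < ∑ i ∈ Icc 1 (d + 1), i ^ 2 := by
    rw [flatLen_eq_sum_coverCount_mul]
    refine (sum_mul_le_sum_sq gapseq_mapsTo gapseq_injOn hcover).lt_of_not_ge fun hge => ?_
    obtain ⟨u, v, huv⟩ := exists_lt_dist_of_coverCount_eq_gapseq hT
      (eqOn_of_sum_sq_le_sum_mul gapseq_mapsTo gapseq_injOn hcover hge)
    exact (hdist u v).not_gt huv
  omega

/-- For `d ≥ 2`, `Σ_{i=1}^{d+1} i² = (d+1)(d+2)(2d+3)/6`, and on the flat arc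
on `d+2` points with gap sequence `(1, 3, 5, …, d+1, …, 6, 4, 2)`, every plane (noncrossing)
spanning tree of diameter at most `d` has length at most `(d+1)(d+2)(2d+3)/6 − 1`
(the longest plane tree being the unique path of length `Σ_{i=1}^{d+1} i²` and diameter
`d+1`). Stated with both sides multiplied by `6`. -/
theorem stmt_14 (d : ℕ) (hd : 2 ≤ d) :
    (6 * ∑ i ∈ Finset.Icc 1 (d + 1), i ^ 2 = (d + 1) * (d + 2) * (2 * d + 3)) ∧
    ∀ T : SimpleGraph (Fin (d + 2)), T.IsTree →
      (∀ a c b e : Fin (d + 2), a < c → c < b → b < e → ¬ (T.Adj a b ∧ T.Adj c e)) →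
      (∀ u v : Fin (d + 2), T.dist u v ≤ d) →
      6 * flatLen d T + 6 ≤ (d + 1) * (d + 2) * (2 * d + 3) :=
  stmt_14_general d
end

section
/- Let a = (−d, 0), b = (d, 0) with 2df > 1 and d ≤ 1, f ≥ 1/2, and let s = (0, √((2df)² − d²)). For any point p = (x, y) with 0 ≤ x ≤ d and any β with 2f − 1 ≤ β and f > 2β, we have (d(1−β) + 2βx)/(d+x) ≥ f. -/
/-- With real parameters `0 < d ≤ 1`, `f ≥ 1/2`, `2df > 1`, and `β` with
`0 < β`, `2f − 1 ≤ β` and `f > 2β`, for every point `p = (x, y)` with `0 ≤ x ≤ d`: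
`(d(1−β) + 2βx)/(d+x) ≥ f`. -/
theorem stmt_18 (d f β x : ℝ) (hd0 : 0 < d) (hd1 : d ≤ 1) (hf : 1 / 2 ≤ f)
    (hdf : 1 < 2 * d * f) (hβ0 : 0 < β) (hβ1 : 2 * f - 1 ≤ β) (hβ2 : 2 * β < f)
    (hx0 : 0 ≤ x) (hxd : x ≤ d) :
    f ≤ (d * (1 - β) + 2 * β * x) / (d + x) := by
  rw [le_div_iff₀ (by linarith)]
  nlinarith [mul_nonneg hx0 (sub_nonneg.2 hβ1), mul_le_mul_of_nonneg_left hxd (le_of_lt hβ0)]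
end
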